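/- arXiv:1510.05636 — 2 statements merged into one kernel-verified Lean document; each statement's English description precedes it below -/
import Mathlib

section
/- For each element w of a Coxeter group W, among the elements of the form w₀(J) (longest elements of finite standard parabolic subgroups) lying below w in weak Bruhat order, there is a unique maximal one; it is w₀(J) where J is the set of simple reflections s with s ≤ w in weak order. -/
/-- The right weak Bruhat order on a Coxeter group: `u ≤ v` iff `ℓ(u) + ℓ(u⁻¹v) = ℓ(v)`. -/
noncomputable def rweakLE {B W : Type*} [Group W] {M : CoxeterMatrix B}
    (cs : CoxeterSystem M W) (u v : W) : Prop :=
  cs.length u + cs.length (u⁻¹ * v) = cs.length v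

/-- The standard parabolic subgroup `W_J` generated by the simple reflections in `J`. -/
def parabolic {B W : Type*} [Group W] {M : CoxeterMatrix B}
    (cs : CoxeterSystem M W) (J : Set B) : Subgroup W :=
  Subgroup.closure (cs.simple '' J)

/-- `w` is the longest element of the (necessarily finite) parabolic subgroup `W_J`. -/
noncomputable def isLongestOf {B W : Type*} [Group W] {M : CoxeterMatrix B}
    (cs : CoxeterSystem M W) (J : Set B) (w : W) : Prop :=
  w ∈ parabolic cs J ∧ (parabolic cs J : Set W).Finite ∧
    ∀ u ∈ parabolic cs J, cs.length u ≤ cs.length w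

/-!
Since `s j ≤ w` exactly when `s j` is a left descent of `w`, everything rests on one fact: if
every `s j` with `j ∈ K` is a left descent of `x`, then all of `W_K` lies below `x` (induction on
a word in `K`, by the exchange condition and the lifting property of weak order). Applied to
`x = w` and `K = D = {j | s j ≤ w}`, it puts `W_D` inside the finite lower ideal of `w`, so `W_D`
has a longest element `m`, and every `j ∈ D` is a left descent of `m`. Any `w₀(J') ≤ w` has
`J' ⊆ D`, so applied to `x = m` the fact gives `w₀(J') ≤ m`.

The exchange condition, for arbitrary words, comes from Tits' sign representation of `W` on
`W × ZMod 2`: it shows that the parity of the number of occurrences of `t` in the inversion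
sequence of a word depends only on the product of the word.
-/

theorem List.even_count_of_getElem_add {α : Type*} [BEq α] {L : List α} {p : ℕ}
    (hlen : L.length = 2 * p) (hper : ∀ k (hk : k < p), L[k] = L[k + p]) (a : α) :
    Even (L.count a) := by
  have hdrop : L.drop p = L.take p := by
    refine List.ext_getElem (by simp; omega) fun k h₁ h₂ => ?_
    simp only [List.getElem_drop, List.getElem_take, add_comm p k]
    exact (hper k (by simp at h₂; omega)).symm
  rw [← L.take_append_drop p, List.count_append, hdrop]
  exact ⟨_, rfl⟩

theorem mul_mul_inv_eq_iff_eq_inv_mul_mul {G : Type*} [Group G] (g t r : G) :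
    g * t * g⁻¹ = r ↔ t = g⁻¹ * r * g := by
  constructor <;> rintro rfl <;> group

namespace CoxeterSystem

variable {B W : Type*} [Group W] {M : CoxeterMatrix B} (cs : CoxeterSystem M W)

open scoped Classical

local prefix:100 "s" => cs.simple
local prefix:100 "π" => cs.wordProd
local prefix:100 "ℓ" => cs.length
local prefix:100 "ris" => cs.rightInvSeq
local prefix:100 "lis" => cs.leftInvSeq

theorem alternatingWord_two_mul_add_two (i j : B) (p : ℕ) :
    alternatingWord i j (2 * p + 2) = i :: j :: alternatingWord i j (2 * p) := by
  rw [alternatingWord_succ', alternatingWord_succ']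
  simp

theorem prod_map_alternatingWord_two_mul {G : Type*} [Monoid G] (f : B → G) (i j : B) (p : ℕ) :
    ((alternatingWord i j (2 * p)).map f).prod = (f i * f j) ^ p := by
  induction p with
  | zero => simp [alternatingWord]
  | succ p ih =>
    rw [mul_add_one, alternatingWord_two_mul_add_two, List.map_cons, List.map_cons,
      List.prod_cons, List.prod_cons, ih, pow_succ', mul_assoc]

theorem reverse_alternatingWord_two_mul (i j : B) (p : ℕ) :
    (alternatingWord i j (2 * p)).reverse = alternatingWord j i (2 * p) := by
  induction p with
  | zero => rfl
  | succ p ih =>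
    rw [mul_add_one, alternatingWord_two_mul_add_two, alternatingWord, alternatingWord,
      List.concat_eq_append, List.concat_eq_append, ← ih]
    simp

theorem wordProd_alternatingWord_two_mul_add_one (i j : B) (p : ℕ) :
    π (alternatingWord i j (2 * p + 1)) = s j * (s i * s j) ^ p := by
  rw [prod_alternatingWord_eq_mul_pow]
  simp [Nat.mul_add_div]

theorem even_count_rightInvSeq_alternatingWord (i j : B) (t : W) :
    Even ((ris (alternatingWord i j (2 * M i j))).count t) := by
  rw [← List.count_reverse, ← leftInvSeq_reverse, reverse_alternatingWord_two_mul]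
  refine List.even_count_of_getElem_add (p := M i j) (by simp) (fun k hk => ?_) t
  rw [getElem_leftInvSeq_alternatingWord cs j i _ k (by omega),
    getElem_leftInvSeq_alternatingWord cs j i _ (k + M i j) (by omega),
    wordProd_alternatingWord_two_mul_add_one, wordProd_alternatingWord_two_mul_add_one, pow_add,
    simple_mul_simple_pow, mul_one]

theorem reflectionSign_involutive (i : B) :
    Function.Involutive
      fun p : W × ZMod 2 => (s i * p.1 * s i, p.2 + if p.1 = s i then 1 else 0) := by
  rintro ⟨t, a⟩
  have hconj : s i * t * s i = s i ↔ t = s i := by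
    simpa only [inv_simple, simple_mul_simple_cancel_right] using
      mul_mul_inv_eq_iff_eq_inv_mul_mul (s i) t (s i)
  by_cases ht : t = s i
  · subst ht
    simp [simple_mul_simple_self, add_assoc, CharTwo.add_self_eq_zero]
  · simp [hconj, ht, ← mul_assoc, simple_mul_simple_self]

noncomputable def reflectionSignPerm (i : B) : Equiv.Perm (W × ZMod 2) :=
  (cs.reflectionSign_involutive i).toPerm

theorem prod_map_reflectionSignPerm_apply (ω : List B) (t : W) (a : ZMod 2) :
    (ω.map cs.reflectionSignPerm).prod (t, a) =
      (π ω * t * (π ω)⁻¹, a + (ris ω).count t) := by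
  induction ω with
  | nil => simp
  | cons i ω ih =>
    rw [List.map_cons, List.prod_cons, Equiv.Perm.mul_apply, ih]
    simp only [reflectionSignPerm, Function.Involutive.coe_toPerm, rightInvSeq, wordProd_cons,
      List.count_cons, mul_mul_inv_eq_iff_eq_inv_mul_mul, beq_iff_eq, eq_comm (a := t),
      mul_inv_rev, inv_simple]
    refine Prod.ext (by simp only [mul_assoc]) ?_
    split_ifs <;> simp [add_assoc]

theorem isLiftable_reflectionSignPerm : M.IsLiftable cs.reflectionSignPerm := by
  intro i j
  rw [← prod_map_alternatingWord_two_mul]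
  ext ⟨t, a⟩ : 1
  rw [prod_map_reflectionSignPerm_apply, prod_alternatingWord_eq_mul_pow]
  simp [(cs.even_count_rightInvSeq_alternatingWord i j t).natCast_zmod_two]

noncomputable def reflectionSignRep : W →* Equiv.Perm (W × ZMod 2) :=
  cs.lift ⟨cs.reflectionSignPerm, cs.isLiftable_reflectionSignPerm⟩

theorem reflectionSignRep_wordProd (ω : List B) :
    cs.reflectionSignRep (π ω) = (ω.map cs.reflectionSignPerm).prod := by
  rw [wordProd, map_list_prod, List.map_map]
  congr 2
  funext i
  exact cs.lift_apply_simple cs.isLiftable_reflectionSignPerm i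

theorem natCast_count_rightInvSeq_eq_of_wordProd_eq {ω ω' : List B} (h : π ω = π ω') (t : W) :
    ((ris ω).count t : ZMod 2) = (ris ω').count t := by
  have := congrArg (fun w => (cs.reflectionSignRep w (t, 0)).2) h
  simpa [reflectionSignRep_wordProd, prod_map_reflectionSignPerm_apply] using this

theorem natCast_count_leftInvSeq_eq_of_wordProd_eq {ω ω' : List B} (h : π ω = π ω') (t : W) :
    ((lis ω).count t : ZMod 2) = (lis ω').count t := by
  rw [← List.reverse_reverse ω, ← List.reverse_reverse ω', leftInvSeq_reverse,
    leftInvSeq_reverse, List.count_reverse, List.count_reverse]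
  exact cs.natCast_count_rightInvSeq_eq_of_wordProd_eq (by simp [h]) t

theorem simple_mem_leftInvSeq_of_isLeftDescent {ω : List B} {i : B}
    (h : cs.IsLeftDescent (π ω) i) : s i ∈ lis ω := by
  -- `s i` occurs exactly once in `lis (i :: ν)` for a reduced word `ν` of `s i * π ω`, and the
  -- parity of its number of occurrences is the same in every word for `π ω`.
  obtain ⟨ν, hν, hν_eq⟩ := cs.exists_isReduced (s i * π ω)
  have hnot : s i ∉ lis ν := fun hmem => by
    have := (cs.isLeftInversion_of_mem_leftInvSeq hν hmem).2
    rw [← hν_eq, simple_mul_simple_cancel_left] at this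
    exact absurd h (not_lt.mpr this.le)
  have hcount : (lis (i :: ν)).count (s i) = 1 := by
    rw [leftInvSeq, List.count_cons_self, List.count_eq_zero_of_not_mem]
    rintro hmem
    obtain ⟨x, hx, hconj⟩ := List.mem_map.mp hmem
    rw [MulAut.conj_apply, mul_mul_inv_eq_iff_eq_inv_mul_mul, inv_simple,
      simple_mul_simple_cancel_right] at hconj
    exact hnot (hconj ▸ hx)
  have hword : π (i :: ν) = π ω := by
    rw [wordProd_cons, ← hν_eq, simple_mul_simple_cancel_left]
  have := cs.natCast_count_leftInvSeq_eq_of_wordProd_eq hword (s i)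
  rw [hcount] at this
  refine List.count_pos_iff.mp (Nat.pos_of_ne_zero fun h0 => ?_)
  rw [h0] at this
  exact absurd this (by decide)

theorem exists_eraseIdx_of_isLeftDescent {ω : List B} {i : B} (h : cs.IsLeftDescent (π ω) i) :
    ∃ j < ω.length, s i * π ω = π (ω.eraseIdx j) := by
  obtain ⟨j, hj, hget⟩ := List.mem_iff_getElem.mp (cs.simple_mem_leftInvSeq_of_isLeftDescent h)
  refine ⟨j, by simpa using hj, ?_⟩
  rw [← getD_leftInvSeq_mul_wordProd, List.getD_eq_getElem _ _ hj, hget]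

theorem length_wordProd_eraseIdx_lt {ω : List B} {j : ℕ} (hj : j < ω.length) :
    ℓ (π (ω.eraseIdx j)) < ω.length := by
  have := cs.length_wordProd_le (ω.eraseIdx j)
  rw [List.length_eraseIdx_of_lt hj] at this
  omega

end CoxeterSystem

section

open CoxeterSystem

variable {B W : Type*} [Group W] {M : CoxeterMatrix B} (cs : CoxeterSystem M W)

local prefix:100 "s" => cs.simple
local prefix:100 "π" => cs.wordProd
local prefix:100 "ℓ" => cs.length

theorem rweakLE_one (w : W) : rweakLE cs 1 w := by
  simp [rweakLE]

theorem rweakLE_trans {u v w : W} (huv : rweakLE cs u v) (hvw : rweakLE cs v w) :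
    rweakLE cs u w := by
  unfold rweakLE at *
  have h₁ := cs.length_mul_le (u⁻¹ * v) (v⁻¹ * w)
  have h₂ := cs.length_mul_le u (u⁻¹ * w)
  simp only [mul_assoc, mul_inv_cancel_left] at h₁ h₂
  omega

theorem rweakLE_simple_iff (i : B) (w : W) : rweakLE cs (s i) w ↔ cs.IsLeftDescent w i := by
  unfold rweakLE IsLeftDescent
  rw [cs.length_simple, cs.inv_simple]
  have := cs.length_simple_mul w i
  omega

theorem rweakLE_simple_mul_simple_mul {u w : W} {i : B} (huw : rweakLE cs u w)
    (hu : cs.IsLeftDescent u i) : rweakLE cs (s i * u) (s i * w) := by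
  unfold rweakLE IsLeftDescent at *
  have h₁ := cs.length_simple_mul u i
  have h₂ := cs.length_simple_mul w i
  have h₃ := cs.length_mul_le (s i * u) ((s i * u)⁻¹ * (s i * w))
  rw [mul_inv_cancel_left] at h₃
  rw [mul_inv_rev, inv_simple, mul_assoc, simple_mul_simple_cancel_left] at h₃ ⊢
  omega

theorem rweakLE_simple_mul_of_isLeftDescent {u w : W} {i : B} (huw : rweakLE cs u w)
    (hw : cs.IsLeftDescent w i) (hu : ¬cs.IsLeftDescent u i) : rweakLE cs (s i * u) w := by
  obtain ⟨α, hα, rfl⟩ := cs.exists_isReduced u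
  obtain ⟨β, hβ, hβ_eq⟩ := cs.exists_isReduced ((π α)⁻¹ * w)
  have hw_eq : π (α ++ β) = w := by rw [wordProd_append, ← hβ_eq, mul_inv_cancel_left]
  -- The letter deleted by the exchange condition cannot lie in `α`, as `i` is no descent of `u`.
  obtain ⟨j, hj, hexch⟩ := cs.exists_eraseIdx_of_isLeftDescent (ω := α ++ β) (by rwa [hw_eq])
  rw [List.length_append] at hj
  rcases lt_or_ge j α.length with hjα | hjα
  · rw [List.eraseIdx_append_of_lt_length hjα, wordProd_append, wordProd_append, ← mul_assoc,
      mul_left_inj] at hexch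
    refine absurd ?_ hu
    rw [IsLeftDescent, hexch, hα.eq]
    exact cs.length_wordProd_eraseIdx_lt hjα
  · rw [hw_eq, List.eraseIdx_append_of_length_le hjα, wordProd_append] at hexch
    have hquot : (s i * π α)⁻¹ * w = π (β.eraseIdx (j - α.length)) := by
      rw [mul_inv_rev, inv_simple, mul_assoc, hexch, inv_mul_cancel_left]
    have h₁ := cs.length_wordProd_eraseIdx_lt (ω := β) (j := j - α.length) (by omega)
    have h₂ := cs.length_simple_mul (π α) i
    have h₃ := cs.length_mul_le (s i * π α) ((s i * π α)⁻¹ * w)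
    rw [mul_inv_cancel_left] at h₃
    unfold rweakLE IsLeftDescent CoxeterSystem.IsReduced at *
    rw [hquot] at h₃ ⊢
    rw [hβ_eq.symm] at hβ
    omega

theorem parabolic_mono {J K : Set B} (h : J ⊆ K) : parabolic cs J ≤ parabolic cs K :=
  Subgroup.closure_mono (Set.image_mono h)

theorem simple_mem_parabolic {J : Set B} {j : B} (hj : j ∈ J) : s j ∈ parabolic cs J :=
  Subgroup.subset_closure ⟨j, hj, rfl⟩

theorem exists_wordProd_eq_of_mem_parabolic {J : Set B} {u : W} (hu : u ∈ parabolic cs J) :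
    ∃ ω : List B, (∀ j ∈ ω, j ∈ J) ∧ π ω = u := by
  induction hu using Subgroup.closure_induction with
  | mem _ hx =>
    obtain ⟨j, hj, rfl⟩ := hx
    exact ⟨[j], by simpa using hj, cs.wordProd_singleton j⟩
  | one => exact ⟨[], by simp, cs.wordProd_nil⟩
  | mul _ _ _ _ h₁ h₂ =>
    obtain ⟨ω₁, hω₁, rfl⟩ := h₁
    obtain ⟨ω₂, hω₂, rfl⟩ := h₂
    exact ⟨ω₁ ++ ω₂, fun j hj => (List.mem_append.mp hj).elim (hω₁ j) (hω₂ j),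
      cs.wordProd_append ω₁ ω₂⟩
  | inv _ _ h =>
    obtain ⟨ω, hω, rfl⟩ := h
    exact ⟨ω.reverse, fun j hj => hω j (List.mem_reverse.mp hj), cs.wordProd_reverse ω⟩

theorem rweakLE_wordProd_of_forall_mem {K : Set B} {x : W}
    (hK : ∀ j ∈ K, cs.IsLeftDescent x j) :
    ∀ ω : List B, (∀ j ∈ ω, j ∈ K) → rweakLE cs (π ω) x
  | [], _ => rweakLE_one cs x
  | i :: ω, hωK => by
    have hω := rweakLE_wordProd_of_forall_mem hK ω fun j hj => hωK j (List.mem_cons_of_mem i hj)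
    rw [wordProd_cons]
    by_cases hdesc : cs.IsLeftDescent (π ω) i
    · obtain ⟨j, hj, hexch⟩ := cs.exists_eraseIdx_of_isLeftDescent hdesc
      rw [hexch]
      exact rweakLE_wordProd_of_forall_mem hK (ω.eraseIdx j)
        fun k hk => hωK k (List.mem_cons_of_mem i (List.mem_of_mem_eraseIdx hk))
    · exact rweakLE_simple_mul_of_isLeftDescent cs hω (hK i (hωK i List.mem_cons_self)) hdesc
termination_by ω => ω.length
decreasing_by
  all_goals simp only [List.length_cons]
  · omega
  · rw [List.length_eraseIdx_of_lt hj]; omega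

theorem rweakLE_of_mem_parabolic {K : Set B} {x : W} (hK : ∀ j ∈ K, cs.IsLeftDescent x j)
    {u : W} (hu : u ∈ parabolic cs K) : rweakLE cs u x := by
  obtain ⟨ω, hωK, rfl⟩ := exists_wordProd_eq_of_mem_parabolic cs hu
  exact rweakLE_wordProd_of_forall_mem cs hK ω hωK

theorem finite_setOf_rweakLE (w : W) : {u | rweakLE cs u w}.Finite := by
  induction h : ℓ w using Nat.strong_induction_on generalizing w with
  | _ n ih =>
  subst h
  obtain ⟨ω, hω, rfl⟩ := cs.exists_isReduced w
  -- A `u ≤ π ω` other than `1` has a left descent `s i`, which then lies in `lis ω`,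
  -- and `s i * u ≤ s i * π ω`, an element of smaller length.
  refine ((Set.finite_singleton 1).union ((cs.leftInvSeq ω).finite_toSet.biUnion
    fun t ht => ((ih _ ?_ (t * π ω) rfl).image (t * ·)))).subset ?_
  · exact (cs.isLeftInversion_of_mem_leftInvSeq hω ht).2
  · intro u hu
    by_cases hu1 : u = 1
    · exact Or.inl hu1
    obtain ⟨i, hi⟩ := cs.exists_leftDescent_of_ne_one hu1
    have hsi : cs.IsLeftDescent (π ω) i :=
      (rweakLE_simple_iff cs i _).mp (rweakLE_trans cs ((rweakLE_simple_iff cs i u).mpr hi) hu)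
    refine Or.inr (Set.mem_biUnion (cs.simple_mem_leftInvSeq_of_isLeftDescent hsi) ?_)
    exact ⟨s i * u, rweakLE_simple_mul_simple_mul cs hu hi, cs.simple_mul_simple_cancel_left i⟩

theorem isLeftDescent_of_isLongestOf {J : Set B} {m : W} (hm : isLongestOf cs J m) {j : B}
    (hj : j ∈ J) : cs.IsLeftDescent m j :=
  lt_of_le_of_ne (hm.2.2 _ (mul_mem (simple_mem_parabolic cs hj) hm.1))
    (cs.length_simple_mul_ne m j)

theorem exists_isLongestOf {J : Set B} (hJ : (parabolic cs J : Set W).Finite) :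
    ∃ m, isLongestOf cs J m := by
  obtain ⟨m, hm, hmax⟩ := Set.exists_max_image _ cs.length hJ ⟨1, one_mem _⟩
  exact ⟨m, hm, hJ, hmax⟩

end
/-- For each `w` in a Coxeter group, among the longest elements `w₀(J)` of finite
standard parabolic subgroups lying below `w` in weak Bruhat order there is a unique
maximal one, namely `w₀(J₀)` where `J₀ = {j : s_j ≤ w}`: it is the maximum of this
collection of elements. -/
theorem stmt_4 {B W : Type*} [Group W] {M : CoxeterMatrix B}
    (cs : CoxeterSystem M W) (w : W) :
    ∃ m : W,
      isLongestOf cs {j | rweakLE cs (cs.simple j) w} m ∧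
      rweakLE cs m w ∧
      (∀ (m' : W) (J' : Set B), isLongestOf cs J' m' → rweakLE cs m' w →
        rweakLE cs m' m) ∧
      -- uniqueness of a maximal such element
      (∀ (m' : W) (J' : Set B), isLongestOf cs J' m' → rweakLE cs m' w →
        (∀ (m'' : W) (J'' : Set B), isLongestOf cs J'' m'' → rweakLE cs m'' w →
          rweakLE cs m' m'' → m'' = m') → m' = m) := by
  set D := {j | rweakLE cs (cs.simple j) w}
  have hD : ∀ j ∈ D, cs.IsLeftDescent w j := fun j hj => (rweakLE_simple_iff cs j w).mp hj
  obtain ⟨m, hm⟩ := exists_isLongestOf cs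
    ((finite_setOf_rweakLE cs w).subset fun u hu => rweakLE_of_mem_parabolic cs hD hu)
  have hmax : ∀ (m' : W) (J' : Set B), isLongestOf cs J' m' → rweakLE cs m' w →
      rweakLE cs m' m := by
    intro m' J' hm' hm'w
    have hJ' : J' ⊆ D := fun j hj =>
      rweakLE_trans cs ((rweakLE_simple_iff cs j m').mpr (isLeftDescent_of_isLongestOf cs hm' hj))
        hm'w
    exact rweakLE_of_mem_parabolic cs (fun j hj => isLeftDescent_of_isLongestOf cs hm hj)
      (parabolic_mono cs hJ' hm'.1)
  refine ⟨m, hm, rweakLE_of_mem_parabolic cs hD hm.1, hmax, ?_⟩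
  intro m' J' hm' hm'w hmaximal
  exact (hmaximal m D hm (rweakLE_of_mem_parabolic cs hD hm.1) (hmax m' J' hm' hm'w)).symm
end

section
/- In a crystal poset with key map κ satisfying the standard axioms, if distinct elements u and u' are both covered by v with κ(u) ≠ κ(u'), then κ(v) is the join of κ(u) and κ(u') in left weak Bruhat order; in particular if ℓ(κ(u)) < ℓ(κ(u')) then κ(v) = κ(u'), and if ℓ(κ(u)) = ℓ(κ(u')) then ℓ(κ(v)) = ℓ(κ(u)) + 1. -/
/-!
A key map sends each `i`-colored cover `u ⋖ v` either to `κ v = κ u` or to a left weak cover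
`κ v = sᵢ κ u`. Everything then reduces to one fact about Coxeter groups: if `sᵢ ≠ sⱼ`, every common
upper bound of `sᵢ w` and `sⱼ w` in left weak order lies above `w`.

This is read off Tits' sign representation of `W` on `W × ZMod 2`, in which `sᵢ` acts by
`(t, z) ↦ (sᵢ t sᵢ, z + [t = sᵢ])`. An element `w` then acts by `(t, z) ↦ (w t w⁻¹, z + η(w, t))`,
where `η(w, t)` is the parity of the number of occurrences of `t` in the right inversion sequence of
any word for `w`, so `η(w, t) = 1` exactly when `t` is a right inversion of `w`. Left weak order is
inclusion of right inversion sets, and the cocycle identity `η(s w, t) = η(w, t) + [w t w⁻¹ = s]`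
gives `Inv(w) ⊆ Inv(sᵢ w) ∪ Inv(sⱼ w)`.
-/

/-- The left weak Bruhat order on a Coxeter group: `u ≤ v` iff `ℓ(v u⁻¹) + ℓ(u) = ℓ(v)`. -/
noncomputable def lweakLE {B W : Type*} [Group W] {M : CoxeterMatrix B}
    (cs : CoxeterSystem M W) (u v : W) : Prop :=
  cs.length (v * u⁻¹) + cs.length u = cs.length v

namespace CoxeterSystem

variable {B W : Type*} [Group W] {M : CoxeterMatrix B} (cs : CoxeterSystem M W)

local prefix:100 "s" => cs.simple
local prefix:100 "π" => cs.wordProd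
local prefix:100 "ℓ" => cs.length
local prefix:100 "ris" => cs.rightInvSeq

open List

theorem simple_mul_mul_simple_eq_simple_iff {i : B} {t : W} :
    s i * t * s i = s i ↔ t = s i := by
  constructor
  · intro h
    simpa [mul_assoc, cs.simple_mul_simple_self] using congr_arg (s i * · * s i) h
  · rintro rfl
    rw [cs.simple_mul_simple_self, one_mul]

section ReflectionRepresentation

open scoped Classical

noncomputable def reflectionPerm (i : B) : Equiv.Perm (W × ZMod 2) :=
  Function.Involutive.toPerm (fun p => (s i * p.1 * s i, p.2 + if p.1 = s i then 1 else 0)) (by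
    rintro ⟨t, z⟩
    simp only [cs.simple_mul_mul_simple_eq_simple_iff]
    refine Prod.ext ?_ ?_
    · simp [mul_assoc]
    · rw [add_assoc, CharTwo.add_self_eq_zero, add_zero])

theorem reflectionPerm_apply (i : B) (t : W) (z : ZMod 2) :
    cs.reflectionPerm i (t, z) = (s i * t * s i, z + if t = s i then 1 else 0) := rfl

theorem prod_map_reflectionPerm_apply (ω : List B) (t : W) (z : ZMod 2) :
    (ω.map cs.reflectionPerm).prod (t, z) = (π ω * t * (π ω)⁻¹, z + (ris ω).count t) := by
  induction ω generalizing z with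
  | nil => simp
  | cons i ω ih =>
    have hconj : π ω * t * (π ω)⁻¹ = s i ↔ (π ω)⁻¹ * s i * π ω = t := by
      constructor <;> intro h <;> rw [← h] <;> group
    rw [map_cons, prod_cons, Equiv.Perm.mul_apply, ih, reflectionPerm_apply, rightInvSeq,
      count_cons, wordProd_cons, mul_inv_rev, inv_simple]
    simp only [hconj, beq_iff_eq, Nat.cast_add, Nat.cast_ite, Nat.cast_one, Nat.cast_zero,
      add_assoc, Prod.mk.injEq, and_true]
    group

theorem rightInvSeq_alternatingWord (i j : B) (n : ℕ) :
    ris (alternatingWord i j n) = (range n).reverse.map fun k => (s j * s i) ^ k * s j := by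
  induction n generalizing i j with
  | zero => rfl
  | succ n ih =>
    rw [alternatingWord_succ, rightInvSeq_concat, ih, range_succ_eq_map]
    simp only [reverse_cons, map_append, ← map_reverse, map_map, concat_eq_append]
    congr 2
    · funext k
      simp only [Function.comp_apply, MulAut.conj_apply, inv_simple, pow_succ, mul_assoc]
      rw [← mul_assoc ((s j * s i) ^ k), mul_pow_mul, mul_assoc]
    · simp

theorem prod_map_alternatingWord {G : Type*} [Monoid G] (f : B → G) (i j : B) (m : ℕ) :
    ((alternatingWord i j (2 * m)).map f).prod = (f i * f j) ^ m := by
  induction m with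
  | zero => simp [alternatingWord]
  | succ m ih =>
    rw [mul_add_one, alternatingWord_succ', alternatingWord_succ', if_neg (by simp [parity_simps]),
      if_pos (by simp [parity_simps]), map_cons, map_cons, prod_cons, prod_cons, ih, pow_succ',
      mul_assoc]

theorem isLiftable_reflectionPerm : M.IsLiftable cs.reflectionPerm := by
  intro i j
  ext ⟨t, z⟩ : 1
  have hprod : π (alternatingWord i j (2 * M i j)) = 1 := by
    rw [wordProd, prod_map_alternatingWord, simple_mul_simple_pow]
  have hcount : ((ris (alternatingWord i j (2 * M i j))).count t : ZMod 2) = 0 := by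
    rw [rightInvSeq_alternatingWord, map_reverse, count_reverse, two_mul, range_add, map_append,
      map_map, count_append]
    have hperiodic : ((fun k => (s j * s i) ^ k * s j) ∘ (M i j + ·)) =
        fun k => (s j * s i) ^ k * s j := by
      funext k
      simp [pow_add]
    rw [hperiodic, ← two_mul, Nat.cast_mul, Nat.cast_two]
    exact mul_eq_zero_of_left CharTwo.two_eq_zero _
  rw [← prod_map_alternatingWord, prod_map_reflectionPerm_apply, hprod, hcount]
  simp

noncomputable def reflectionRep : W →* Equiv.Perm (W × ZMod 2) :=
  cs.lift ⟨cs.reflectionPerm, cs.isLiftable_reflectionPerm⟩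

theorem reflectionRep_wordProd (ω : List B) :
    cs.reflectionRep (π ω) = (ω.map cs.reflectionPerm).prod := by
  rw [wordProd, map_list_prod, map_map]
  congr 2
  funext i
  exact cs.lift_apply_simple cs.isLiftable_reflectionPerm i

noncomputable def inversionParity (w t : W) : ZMod 2 := (cs.reflectionRep w (t, 0)).2

theorem inversionParity_wordProd (ω : List B) (t : W) :
    cs.inversionParity (π ω) t = (ris ω).count t := by
  rw [inversionParity, reflectionRep_wordProd, prod_map_reflectionPerm_apply, zero_add]

theorem reflectionRep_apply (w t : W) (z : ZMod 2) :
    cs.reflectionRep w (t, z) = (w * t * w⁻¹, z + cs.inversionParity w t) := by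
  obtain ⟨ω, rfl⟩ := cs.wordProd_surjective w
  rw [inversionParity_wordProd, reflectionRep_wordProd, prod_map_reflectionPerm_apply]

theorem inversionParity_mul (u v t : W) :
    cs.inversionParity (u * v) t =
      cs.inversionParity v t + cs.inversionParity u (v * t * v⁻¹) := by
  rw [inversionParity, map_mul, Equiv.Perm.mul_apply, reflectionRep_apply, reflectionRep_apply,
    zero_add]

theorem inversionParity_one (t : W) : cs.inversionParity 1 t = 0 := by
  simpa using cs.inversionParity_wordProd [] t

theorem inversionParity_simple (i : B) (t : W) :
    cs.inversionParity (s i) t = if t = s i then 1 else 0 := by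
  simpa [count_singleton', eq_comm] using cs.inversionParity_wordProd [i] t

theorem inversionParity_self {t : W} (ht : cs.IsReflection t) : cs.inversionParity t t = 1 := by
  obtain ⟨w, i, rfl⟩ := ht
  have hconj : w⁻¹ * (w * s i * w⁻¹) * w⁻¹⁻¹ = s i := by group
  have hcancel : cs.inversionParity w⁻¹ (w * s i * w⁻¹) + cs.inversionParity w (s i) = 0 := by
    have h := cs.inversionParity_mul w w⁻¹ (w * s i * w⁻¹)
    rwa [mul_inv_cancel, inversionParity_one, hconj, eq_comm] at h
  rw [inversionParity_mul, inversionParity_mul, hconj, inversionParity_simple, if_pos rfl,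
    ← inv_simple, mul_inv_cancel_right, inv_simple]
  linear_combination hcancel

theorem isRightInversion_of_inversionParity_eq_one {w t : W} (h : cs.inversionParity w t = 1) :
    cs.IsRightInversion w t := by
  obtain ⟨ω, hω, rfl⟩ := cs.exists_isReduced w
  rw [inversionParity_wordProd] at h
  refine cs.isRightInversion_of_mem_rightInvSeq hω (count_pos_iff.mp (Nat.pos_of_ne_zero ?_))
  rintro h0
  simp [h0] at h

theorem isRightInversion_iff_inversionParity_eq_one {w t : W} :
    cs.IsRightInversion w t ↔ cs.inversionParity w t = 1 := by
  refine ⟨fun ⟨ht, hlt⟩ => ?_, cs.isRightInversion_of_inversionParity_eq_one⟩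
  have hwt : cs.inversionParity (w * t) t ≠ 1 := fun h => by
    have := (cs.isRightInversion_of_inversionParity_eq_one h).2
    rw [mul_assoc, ht.mul_self, mul_one] at this
    omega
  have h := cs.inversionParity_mul (w * t) t t
  rw [mul_inv_cancel_right, mul_assoc, ht.mul_self, mul_one, cs.inversionParity_self ht,
    (by decide : ∀ x : ZMod 2, x ≠ 1 → x = 0) _ hwt, add_zero] at h
  exact h

theorem inversionParity_mul_simple (w : W) (i : B) (t : W) :
    cs.inversionParity (w * s i) t =
      (if t = s i then 1 else 0) + cs.inversionParity w (s i * t * s i) := by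
  rw [inversionParity_mul, inversionParity_simple, inv_simple]

theorem inversionParity_simple_mul (i : B) (w t : W) :
    cs.inversionParity (s i * w) t =
      cs.inversionParity w t + if w * t * w⁻¹ = s i then 1 else 0 := by
  rw [inversionParity_mul, inversionParity_simple]

end ReflectionRepresentation

section WeakOrder

theorem lweakLE_refl (w : W) : lweakLE cs w w := by
  simp [lweakLE]

theorem lweakLE_simple_mul {w : W} {i : B} (h : ℓ (s i * w) = ℓ w + 1) :
    lweakLE cs w (s i * w) := by
  rw [lweakLE, mul_inv_cancel_right, length_simple, h, add_comm]

theorem lweakLE_of_forall_isRightInversion {u x : W}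
    (h : ∀ t, cs.IsRightInversion u t → cs.IsRightInversion x t) : lweakLE cs u x := by
  induction hn : ℓ u generalizing u x with
  | zero =>
    rw [cs.length_eq_zero_iff] at hn
    subst hn
    simp [lweakLE]
  | succ n ih =>
    obtain ⟨i, hi⟩ := cs.exists_rightDescent_of_ne_one (w := u) (by rintro rfl; simp at hn)
    have hix : cs.IsRightDescent x i := by
      rw [← isRightInversion_simple_iff_isRightDescent] at hi ⊢
      exact h _ hi
    have hsub : ∀ t, cs.IsRightInversion (u * s i) t → cs.IsRightInversion (x * s i) t := by
      rw [← isRightInversion_simple_iff_isRightDescent] at hi hix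
      simp only [isRightInversion_iff_inversionParity_eq_one, inversionParity_mul_simple]
        at h hi hix ⊢
      intro t ht
      by_cases hts : t = s i
      · subst hts
        simp [hi] at ht
      · simpa [hts] using h _ (by simpa [hts] using ht)
    rw [isRightDescent_iff] at hi hix
    have hle := ih hsub (by omega)
    unfold lweakLE at hle ⊢
    rw [show x * s i * (u * s i)⁻¹ = x * u⁻¹ by group] at hle
    omega

theorem lweakLE_iff_forall_isRightInversion {u x : W} :
    lweakLE cs u x ↔ ∀ t, cs.IsRightInversion u t → cs.IsRightInversion x t := by
  refine ⟨fun hux t ht => ⟨ht.1, ?_⟩, cs.lweakLE_of_forall_isRightInversion⟩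
  have hle := cs.length_mul_le (x * u⁻¹) (u * t)
  rw [show x * u⁻¹ * (u * t) = x * t by group] at hle
  have := ht.2
  unfold lweakLE at hux
  omega

theorem lweakLE_of_lweakLE_simple_mul {w x : W} {i j : B} (hij : s i ≠ s j)
    (hi : lweakLE cs (s i * w) x) (hj : lweakLE cs (s j * w) x) : lweakLE cs w x := by
  rw [lweakLE_iff_forall_isRightInversion] at hi hj ⊢
  intro t ht
  simp only [isRightInversion_iff_inversionParity_eq_one, inversionParity_simple_mul]
    at hi hj ht ⊢
  by_cases hti : w * t * w⁻¹ = s i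
  · exact hj t (by simp [ht, hti, hij])
  · exact hi t (by simp [ht, hti])

end WeakOrder

def EqOrSimpleLift (i : B) (a w : W) : Prop :=
  w = a ∨ (w = s i * a ∧ ℓ w = ℓ a + 1)

section EqOrSimpleLift

variable {cs}

theorem EqOrSimpleLift.lweakLE {i : B} {a w : W} (h : cs.EqOrSimpleLift i a w) :
    lweakLE cs a w := by
  rcases h with h | ⟨rfl, hlen⟩
  · rw [h]
    exact cs.lweakLE_refl a
  · exact cs.lweakLE_simple_mul hlen

theorem EqOrSimpleLift.length_le {i : B} {a w : W} (h : cs.EqOrSimpleLift i a w) :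
    ℓ w ≤ ℓ a + 1 := by
  rcases h with rfl | ⟨-, hlen⟩ <;> omega

theorem EqOrSimpleLift.length_eq_of_ne {i : B} {a w : W} (h : cs.EqOrSimpleLift i a w)
    (hne : w ≠ a) : ℓ w = ℓ a + 1 :=
  (h.resolve_left hne).2

theorem lweakLE_of_eqOrSimpleLift {i j : B} {a b w x : W} (ha : cs.EqOrSimpleLift i a w)
    (hb : cs.EqOrSimpleLift j b w) (hab : a ≠ b) (hax : lweakLE cs a x) (hbx : lweakLE cs b x) :
    lweakLE cs w x := by
  rcases ha with rfl | ⟨rfl, -⟩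
  · exact hax
  rcases hb with hb | ⟨hb, -⟩
  · rwa [hb]
  have hba : b = s j * (s i * a) := by rw [hb, simple_mul_simple_cancel_left]
  refine cs.lweakLE_of_lweakLE_simple_mul (i := i) (j := j) (fun hij => hab ?_) ?_ ?_
  · rw [hba, ← hij, simple_mul_simple_cancel_left]
  · rwa [simple_mul_simple_cancel_left]
  · rwa [← hba]

end EqOrSimpleLift

end CoxeterSystem

theorem key_eqOrSimpleLift_of_cover {Crys I W : Type*} [Group W] {M : CoxeterMatrix I}
    (cs : CoxeterSystem M W) (C : I → Crys → Crys → Prop) (κ : Crys → W)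
    (h1 : ∀ (i : I) (u v : Crys), C i u v → (∃ u', C i u' u) → κ v = κ u)
    (h2 : ∀ (i : I) (u v : Crys), C i u v → κ v = κ u ∨ κ v = cs.simple i * κ u)
    (h3 : ∀ (i : I) (u : Crys), ¬(∃ u', C i u' u) →
      cs.length (cs.simple i * κ u) = cs.length (κ u) + 1)
    {i : I} {u v : Crys} (hcov : C i u v) : cs.EqOrSimpleLift i (κ u) (κ v) := by
  rcases h2 i u v hcov with hfix | hlift
  · exact Or.inl hfix
  by_cases hfix : κ v = κ u
  · exact Or.inl hfix
  exact Or.inr ⟨hlift, hlift ▸ h3 i u fun hlow => hfix (h1 i u v hcov hlow)⟩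

theorem stmt_12_general {Crys I W : Type*} [Group W] {M : CoxeterMatrix I}
    (cs : CoxeterSystem M W)
    (C : I → Crys → Crys → Prop)
    (κ : Crys → W)
    (h1 : ∀ (i : I) (u v : Crys), C i u v → (∃ u', C i u' u) → κ v = κ u)
    (h2 : ∀ (i : I) (u v : Crys), C i u v → κ v = κ u ∨ κ v = cs.simple i * κ u)
    (h3 : ∀ (i : I) (u : Crys), ¬(∃ u', C i u' u) →
      cs.length (cs.simple i * κ u) = cs.length (κ u) + 1)
    {u u' v : Crys} {i j : I}
    (hcov : C i u v) (hcov' : C j u' v) (hκ : κ u ≠ κ u') :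
    (lweakLE cs (κ u) (κ v) ∧ lweakLE cs (κ u') (κ v) ∧
      ∀ w : W, lweakLE cs (κ u) w → lweakLE cs (κ u') w → lweakLE cs (κ v) w) ∧
    (cs.length (κ u) < cs.length (κ u') → κ v = κ u') ∧
    (cs.length (κ u) = cs.length (κ u') →
      cs.length (κ v) = cs.length (κ u) + 1) := by
  have hu := key_eqOrSimpleLift_of_cover cs C κ h1 h2 h3 hcov
  have hu' := key_eqOrSimpleLift_of_cover cs C κ h1 h2 h3 hcov'
  refine ⟨⟨hu.lweakLE, hu'.lweakLE, fun _ => cs.lweakLE_of_eqOrSimpleLift hu hu' hκ⟩,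
    fun hlt => ?_, fun hlen => ?_⟩
  · by_contra hne
    have := hu'.length_eq_of_ne hne
    have := hu.length_le
    omega
  · by_cases hfix : κ v = κ u
    · have := hu'.length_eq_of_ne (hfix ▸ hκ)
      rw [hfix] at this
      omega
    · exact hu.length_eq_of_ne hfix

/-- In a crystal poset with a key map `κ` satisfying the standard axioms, if distinct
elements `u` and `u'` are both covered by `v` with `κ(u) ≠ κ(u')`, then `κ(v)` is the
join of `κ(u)` and `κ(u')` in the left weak Bruhat order; in particular if
`ℓ(κ(u)) < ℓ(κ(u'))` then `κ(v) = κ(u')`, and if `ℓ(κ(u)) = ℓ(κ(u'))` then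
`ℓ(κ(v)) = ℓ(κ(u)) + 1`. -/
theorem stmt_12 {Crys I W : Type*} [Group W] {M : CoxeterMatrix I}
    (cs : CoxeterSystem M W)
    (C : I → Crys → Crys → Prop)
    (hup : ∀ (i : I) (u v v' : Crys), C i u v → C i u v' → v = v')
    (hdown : ∀ (i : I) (u u' v : Crys), C i u v → C i u' v → u = u')
    (κ : Crys → W)
    (h1 : ∀ (i : I) (u v : Crys), C i u v → (∃ u', C i u' u) → κ v = κ u)
    (h2 : ∀ (i : I) (u v : Crys), C i u v → κ v = κ u ∨ κ v = cs.simple i * κ u)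
    (h3 : ∀ (i : I) (u : Crys), ¬(∃ u', C i u' u) →
      cs.length (cs.simple i * κ u) = cs.length (κ u) + 1)
    {u u' v : Crys} {i j : I}
    (hne : u ≠ u') (hcov : C i u v) (hcov' : C j u' v) (hκ : κ u ≠ κ u') :
    (lweakLE cs (κ u) (κ v) ∧ lweakLE cs (κ u') (κ v) ∧
      ∀ w : W, lweakLE cs (κ u) w → lweakLE cs (κ u') w → lweakLE cs (κ v) w) ∧
    (cs.length (κ u) < cs.length (κ u') → κ v = κ u') ∧
    (cs.length (κ u) = cs.length (κ u') →
      cs.length (κ v) = cs.length (κ u) + 1) :=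
  stmt_12_general cs C κ h1 h2 h3 hcov hcov' hκ
end
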